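/- arXiv:1308.1385 — 6 statements merged into one kernel-verified Lean document; each statement's English description precedes it below -/
import Mathlib

section
/- Suppose that for a database D and a real number λ ≥ 0, real estimates ŷ_T are given for all T ⊆ [d] with |T| ≤ k, satisfying |ŷ_T − parity_T(D)| ≤ λ for every such T. Define z_{S,β} = Σ_{T ⊆ S} α_{S,β,T} · ŷ_T for each S ⊆ [d] with |S| = k and β ∈ {−1,1}^S. Then |z_{S,β} − marg_{(S,β)}(D)| ≤ λ for every such S and β. -/
/-!
For signs `x, b ∈ {±1}` the indicator `1[x = b]` equals `(1 + b x) / 2`. Expanding the product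
of these over `S` writes the marginal indicator as `∑_{T ⊆ S} 2^{-|S|} (∏_{i ∈ T} β_i) ∏_{i ∈ T} e_i`,
so summing over the database gives `marg_{(S,β)} = ∑_{T ⊆ S} α_{S,β,T} parity_T`. The error of
`z_{S,β}` is therefore `∑_T α_{S,β,T} (ŷ_T - parity_T)`, bounded by `λ ∑_T |α_{S,β,T}| = λ`.
-/

open Finset

section SignVectors

variable {K ι : Type*} [Field K]

def parity (D : Multiset (ι → K)) (T : Finset ι) : K :=
  (D.map fun e => ∏ i ∈ T, e i).sum

def marginal [DecidableEq K] (D : Multiset (ι → K)) (S : Finset ι) (β : ι → K) : K :=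
  (D.map fun e => ∏ i ∈ S, if e i = β i then 1 else 0).sum

theorem ite_eq_two_inv_mul_one_add [DecidableEq K] [NeZero (2 : K)] {x b : K}
    (hx : x = 1 ∨ x = -1) (hb : b = 1 ∨ b = -1) :
    (if x = b then (1 : K) else 0) = 2⁻¹ * (1 + b * x) := by
  have hne : (1 : K) ≠ -1 := fun h => two_ne_zero (by linear_combination h : (2 : K) = 0)
  rcases hx with rfl | rfl <;> rcases hb with rfl | rfl <;> simp [hne, hne.symm, one_add_one_eq_two, inv_mul_cancel₀ (two_ne_zero : (2 : K) ≠ 0)]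

theorem prod_ite_eq_sum_powerset [DecidableEq K] [NeZero (2 : K)] {S : Finset ι} {e β : ι → K}
    (he : ∀ i ∈ S, e i = 1 ∨ e i = -1) (hβ : ∀ i ∈ S, β i = 1 ∨ β i = -1) :
    ∏ i ∈ S, (if e i = β i then (1 : K) else 0) =
      ∑ T ∈ S.powerset, ((2 : K) ^ (-(S.card : ℤ)) * ∏ i ∈ T, β i) * ∏ i ∈ T, e i := by
  calc ∏ i ∈ S, (if e i = β i then (1 : K) else 0)
      = ∏ i ∈ S, 2⁻¹ * (1 + β i * e i) :=
        prod_congr rfl fun i hi => ite_eq_two_inv_mul_one_add (he i hi) (hβ i hi)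
    _ = (2 : K) ^ (-(S.card : ℤ)) * ∑ T ∈ S.powerset, ∏ i ∈ T, β i * e i := by
        rw [prod_mul_distrib, prod_const, prod_one_add, zpow_neg, zpow_natCast, inv_pow]
    _ = _ := by
        simp only [mul_sum, prod_mul_distrib, mul_assoc]

theorem marginal_eq_sum_parity [DecidableEq K] [NeZero (2 : K)] {D : Multiset (ι → K)}
    {S : Finset ι} {β : ι → K} (hD : ∀ e ∈ D, ∀ i ∈ S, e i = 1 ∨ e i = -1)
    (hβ : ∀ i ∈ S, β i = 1 ∨ β i = -1) :
    marginal D S β =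
      ∑ T ∈ S.powerset, ((2 : K) ^ (-(S.card : ℤ)) * ∏ i ∈ T, β i) * parity D T := by
  unfold marginal parity
  rw [Multiset.map_congr rfl fun e he => prod_ite_eq_sum_powerset (hD e he) hβ,
    Multiset.sum_map_sum]
  simp only [Multiset.sum_map_mul_left]

end SignVectors

theorem abs_sum_mul_sub_sum_mul_le {ι R : Type*} [CommRing R] [LinearOrder R]
    [IsStrictOrderedRing R] (s : Finset ι) (c y p : ι → R) {lam : R}
    (h : ∀ i ∈ s, |y i - p i| ≤ lam) :
    |∑ i ∈ s, c i * y i - ∑ i ∈ s, c i * p i| ≤ (∑ i ∈ s, |c i|) * lam := by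
  rw [← sum_sub_distrib, sum_mul]
  refine (abs_sum_le_sum_abs _ _).trans (sum_le_sum fun i hi => ?_)
  rw [← mul_sub, abs_mul]
  exact mul_le_mul_of_nonneg_left (h i hi) (abs_nonneg _)

theorem sum_powerset_abs_two_zpow_mul_prod_sign {ι K : Type*} [Field K] [LinearOrder K]
    [IsStrictOrderedRing K] {S : Finset ι} {β : ι → K} (hβ : ∀ i ∈ S, β i = 1 ∨ β i = -1) :
    ∑ T ∈ S.powerset, |(2 : K) ^ (-(S.card : ℤ)) * ∏ i ∈ T, β i| = 1 := by
  have habs : ∀ T ∈ S.powerset, |(2 : K) ^ (-(S.card : ℤ)) * ∏ i ∈ T, β i| =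
      (2 : K) ^ (-(S.card : ℤ)) := by
    intro T hT
    have hprod : |∏ i ∈ T, β i| = 1 := by
      rw [abs_prod]
      exact prod_eq_one fun i hi => by rcases hβ i (mem_powerset.1 hT hi) with hb | hb <;> simp [hb]
    rw [abs_mul, hprod, mul_one, abs_of_pos (by positivity)]
  rw [sum_congr rfl habs, sum_const, card_powerset, nsmul_eq_mul, Nat.cast_pow, Nat.cast_ofNat,
    zpow_neg, zpow_natCast, mul_inv_cancel₀ (by positivity)]

theorem stmt_1_general (d k : ℕ)
    (D : Multiset (Fin d → ℝ)) (hD : ∀ e ∈ D, ∀ i, e i = 1 ∨ e i = -1)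
    (lam : ℝ)
    (yhat : Finset (Fin d) → ℝ)
    (hyhat : ∀ T : Finset (Fin d), T.card ≤ k →
      |yhat T - (D.map fun e => ∏ i ∈ T, e i).sum| ≤ lam)
    (S : Finset (Fin d)) (hS : S.card = k)
    (β : Fin d → ℝ) (hβ : ∀ i ∈ S, β i = 1 ∨ β i = -1) :
    |(∑ T ∈ S.powerset, ((2 : ℝ) ^ (-(k : ℤ)) * ∏ i ∈ T, β i) * yhat T) -
        (D.map fun e => ∏ i ∈ S, (if e i = β i then (1 : ℝ) else 0)).sum| ≤ lam := by
  subst hS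
  change |_ - marginal D S β| ≤ lam
  rw [marginal_eq_sum_parity (fun e he i _ => hD e he i) hβ]
  calc _ ≤ (∑ T ∈ S.powerset, |(2 : ℝ) ^ (-(S.card : ℤ)) * ∏ i ∈ T, β i|) * lam :=
        abs_sum_mul_sub_sum_mul_le _ _ _ _ fun T hT =>
          hyhat T (card_le_card (mem_powerset.1 hT))
    _ = lam := by rw [sum_powerset_abs_two_zpow_mul_prod_sign hβ, one_mul]

/-- If estimates `ŷ_T` satisfy `|ŷ_T − parity_T(D)| ≤ λ` for all `T ⊆ [d]`
with `|T| ≤ k`, then the estimates `z_{S,β} = Σ_{T ⊆ S} α_{S,β,T} ŷ_T` (where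
`α_{S,β,T} = 2^{−k} ∏_{i∈T} β_i`) satisfy `|z_{S,β} − marg_{(S,β)}(D)| ≤ λ` for every
`S ⊆ [d]` with `|S| = k` and every `β ∈ {−1,1}^S`. -/
theorem stmt_1 (d k : ℕ) (hd : 1 ≤ d) (hk : 1 ≤ k)
    (D : Multiset (Fin d → ℝ)) (hD : ∀ e ∈ D, ∀ i, e i = 1 ∨ e i = -1)
    (lam : ℝ) (hlam : 0 ≤ lam)
    (yhat : Finset (Fin d) → ℝ)
    (hyhat : ∀ T : Finset (Fin d), T.card ≤ k →
      |yhat T - (D.map fun e => ∏ i ∈ T, e i).sum| ≤ lam)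
    (S : Finset (Fin d)) (hS : S.card = k)
    (β : Fin d → ℝ) (hβ : ∀ i ∈ S, β i = 1 ∨ β i = -1) :
    |(∑ T ∈ S.powerset, ((2 : ℝ) ^ (-(k : ℤ)) * ∏ i ∈ T, β i) * yhat T) -
        (D.map fun e => ∏ i ∈ S, (if e i = β i then (1 : ℝ) else 0)).sum| ≤ lam :=
  stmt_1_general d k D hD lam yhat hyhat S hS β hβ
end

section
/- There is a universal constant C such that for all integers d ≥ 1 and k ≥ 1 and every probability vector p on [d]^k, the Gaussian mean width of P^{1/2}L0 satisfies ℓ*(P^{1/2}L0) = E_g sup_{h ∈ L0} ⟨g, P^{1/2}h⟩ ≤ C · d^{⌈k/2⌉/2}, where g ∈ ℝ^{[d]^k} has i.i.d. standard normal N(0,1) coordinates. -/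
/-! For fixed `g`, the functional `h ↦ ⟨g, P^{1/2} h⟩` is linear, so its supremum over `L0` is its
maximum over the `N = 2^(d^⌊k/2⌋ + d^⌈k/2⌉)` sign tensors `w ⊗ z`. At each sign tensor it is
`∑ √p_f (w ⊗ z)_f g_f`, a centred Gaussian of variance `∑ p_f = 1`. The expected maximum of `N`
variables with sub-Gaussian parameter `c` is at most `log N / t + c t / 2` for every `t > 0`
(bound `exp (t · max)` by the sum of the `exp (t X_i)` and use Jensen for `log`). Since
`log N ≤ 2 d^⌈k/2⌉`, the choice `t = 2 d^(⌈k/2⌉/2)` gives the bound with `C = 2`. -/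

open Finset MeasureTheory ProbabilityTheory

/-- First `⌊k/2⌋` coordinates of a `k`-tuple from `[d]`. -/
def tupHead {d k : ℕ} (f : Fin k → Fin d) : Fin (k / 2) → Fin d :=
  fun i => f (Fin.castLE (Nat.div_le_self k 2) i)

/-- Last `⌈k/2⌉ = k − ⌊k/2⌋` coordinates of a `k`-tuple from `[d]`. -/
def tupTail {d k : ℕ} (f : Fin k → Fin d) : Fin (k - k / 2) → Fin d :=
  fun i => f ⟨k / 2 + i.val, by have := i.isLt; omega⟩

/-- `L0 = conv{w ⊗ z : w ∈ {−1,1}^{[d]^{⌊k/2⌋}}, z ∈ {−1,1}^{[d]^{⌈k/2⌉}}}`. -/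
noncomputable def L0set (d k : ℕ) : Set ((Fin k → Fin d) → ℝ) :=
  convexHull ℝ
    {x | ∃ w : (Fin (k / 2) → Fin d) → ℝ, ∃ z : (Fin (k - k / 2) → Fin d) → ℝ,
      (∀ s, w s = 1 ∨ w s = -1) ∧ (∀ t, z t = 1 ∨ z t = -1) ∧
      x = fun f => w (tupHead f) * z (tupTail f)}

open Real Set
open scoped NNReal

lemma hasSubgaussianMGF_id_gaussianReal (v : ℝ≥0) :
    HasSubgaussianMGF id v (gaussianReal 0 v) where
  integrable_exp_mul t := by simpa using integrable_exp_mul_gaussianReal (μ := 0) (v := v) t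
  mgf_le t := by rw [mgf_gaussianReal (μ := 0) (v := v) (by simp)]; simp

lemma hasSubgaussianMGF_sum_mul_pi_gaussianReal {ι : Type*} [Fintype ι] (c : ι → ℝ) :
    HasSubgaussianMGF (fun g : ι → ℝ => ∑ i, c i * g i) (∑ i, ‖c i‖₊ ^ 2)
      (Measure.pi fun _ : ι => gaussianReal 0 1) := by
  have hcoord (i : ι) : HasSubgaussianMGF (fun g : ι → ℝ => g i) 1
      (Measure.pi fun _ : ι => gaussianReal 0 1) := by
    have := hasSubgaussianMGF_id_gaussianReal 1
    rw [← (measurePreserving_eval (fun _ : ι => gaussianReal 0 1) i).map_eq] at this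
    exact (HasSubgaussianMGF.id_map_iff (measurable_pi_apply i).aemeasurable).1 this
  have hindep : iIndepFun (fun i (g : ι → ℝ) => c i * g i)
      (Measure.pi fun _ : ι => gaussianReal 0 1) :=
    iIndepFun_pi (X := fun i x => c i * x) fun i => (measurable_const_mul (c i)).aemeasurable
  convert HasSubgaussianMGF.sum_of_iIndepFun hindep (s := Finset.univ)
    (fun i _ => (hcoord i).const_mul (c i)) using 1
  exact sum_congr rfl fun i _ => NNReal.eq <| by
    change ‖c i‖ ^ 2 = c i ^ 2 * 1
    rw [Real.norm_eq_abs, sq_abs, mul_one]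

lemma integrable_finset_sup' {Ω ι : Type*} [MeasurableSpace Ω] {μ : Measure Ω} {s : Finset ι}
    (hs : s.Nonempty) {X : ι → Ω → ℝ} (hX : ∀ i ∈ s, Integrable (X i) μ) :
    Integrable (fun ω => s.sup' hs fun i => X i ω) μ := by
  simp_rw [← Finset.sup'_apply]
  exact sup'_induction hs X (p := (Integrable · μ)) (fun _ hf _ hg => hf.sup hg) hX

lemma log_le_log_sub_one_add_div {x a : ℝ} (hx : 0 < x) (ha : 0 < a) :
    log x ≤ log a - 1 + x / a := by
  have := log_le_sub_one_of_pos (div_pos hx ha)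
  rw [log_div hx.ne' ha.ne'] at this
  linarith

theorem integral_finset_sup'_le_of_hasSubgaussianMGF {Ω ι : Type*} [MeasurableSpace Ω]
    {μ : Measure Ω} [IsProbabilityMeasure μ] {s : Finset ι} (hs : s.Nonempty)
    {X : ι → Ω → ℝ} {c : ℝ≥0} (hX : ∀ i ∈ s, HasSubgaussianMGF (X i) c μ) {t : ℝ} (ht : 0 < t) :
    ∫ ω, s.sup' hs (fun i => X i ω) ∂μ ≤ log #s / t + c * t / 2 := by
  set Y : Ω → ℝ := fun ω => ∑ i ∈ s, exp (t * X i ω)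
  set a : ℝ := #s * exp (c * t ^ 2 / 2)
  have ha : 0 < a := by have := hs.card_pos; positivity
  have hY_int : Integrable Y μ :=
    integrable_finsetSum _ fun i hi => (hX i hi).integrable_exp_mul t
  have hY_le : ∫ ω, Y ω ∂μ ≤ a := by
    rw [integral_finsetSum _ fun i hi => (hX i hi).integrable_exp_mul t]
    calc ∑ i ∈ s, ∫ ω, exp (t * X i ω) ∂μ ≤ ∑ _i ∈ s, exp (c * t ^ 2 / 2) :=
          sum_le_sum fun i hi => (hX i hi).mgf_le t
      _ = a := by rw [sum_const, nsmul_eq_mul]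
  have hpt (ω : Ω) : t * s.sup' hs (fun i => X i ω) ≤ log a - 1 + Y ω / a := by
    obtain ⟨i, hi, hmax⟩ := exists_mem_eq_sup' hs fun i => X i ω
    have hexp : exp (t * X i ω) ≤ Y ω :=
      single_le_sum (f := fun j => exp (t * X j ω)) (fun j _ => (exp_pos _).le) hi
    calc t * s.sup' hs (fun i => X i ω) = log (exp (t * X i ω)) := by rw [hmax, log_exp]
      _ ≤ log (Y ω) := log_le_log (exp_pos _) hexp
      _ ≤ log a - 1 + Y ω / a := log_le_log_sub_one_add_div ((exp_pos _).trans_le hexp) ha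
  have hint : t * ∫ ω, s.sup' hs (fun i => X i ω) ∂μ ≤ log a := by
    calc t * ∫ ω, s.sup' hs (fun i => X i ω) ∂μ
        = ∫ ω, t * s.sup' hs (fun i => X i ω) ∂μ := (integral_const_mul _ _).symm
      _ ≤ ∫ ω, (log a - 1 + Y ω / a) ∂μ :=
          integral_mono ((integrable_finset_sup' hs fun i hi => (hX i hi).integrable).const_mul t)
            ((integrable_const _).add (hY_int.div_const a)) hpt
      _ = log a - 1 + (∫ ω, Y ω ∂μ) / a := by
          rw [integral_add (integrable_const _) (hY_int.div_const a), integral_const,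
            integral_div, probReal_univ, one_smul]
      _ ≤ log a := by
          have : (∫ ω, Y ω ∂μ) / a ≤ 1 := (div_le_one ha).2 hY_le
          linarith
  have hlog_a : log a = log #s + c * t ^ 2 / 2 := by
    rw [log_mul (by exact_mod_cast hs.card_pos.ne') (exp_pos _).ne', log_exp]
  calc _ ≤ log a / t := (le_div_iff₀' ht).2 hint
    _ = _ := by rw [hlog_a]; field_simp

lemma csSup_image_convexHull_range {E ι : Type*} [AddCommGroup E] [Module ℝ E] [Fintype ι]
    [Nonempty ι] {φ : E → ℝ} (hφ : ConvexOn ℝ univ φ) (v : ι → E) :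
    sSup (φ '' convexHull ℝ (range v)) = Finset.univ.sup' univ_nonempty (φ ∘ v) := by
  refine IsGreatest.csSup_eq ⟨?_, ?_⟩
  · obtain ⟨i, -, hi⟩ := exists_mem_eq_sup' univ_nonempty (φ ∘ v)
    exact ⟨v i, subset_convexHull ℝ _ ⟨i, rfl⟩, hi.symm⟩
  · rintro _ ⟨x, hx, rfl⟩
    obtain ⟨_, ⟨i, rfl⟩, hle⟩ := hφ.exists_ge_of_mem_convexHull (subset_univ _) hx
    exact hle.trans (le_sup' (φ ∘ v) (mem_univ i))

abbrev SignPattern (d k : ℕ) : Type :=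
  ((Fin (k / 2) → Fin d) → ℤˣ) × ((Fin (k - k / 2) → Fin d) → ℤˣ)

def signTensor {d k : ℕ} (ε : SignPattern d k) (f : Fin k → Fin d) : ℝ :=
  ((ε.1 (tupHead f) * ε.2 (tupTail f) : ℤˣ) : ℤ)

lemma signTensor_sq {d k : ℕ} (ε : SignPattern d k) (f : Fin k → Fin d) :
    signTensor ε f ^ 2 = 1 := by
  rw [signTensor, ← Int.cast_pow, ← Units.val_pow_eq_pow_val, Int.units_sq]; simp

lemma exists_units_int_cast_eq {x : ℝ} (hx : x = 1 ∨ x = -1) : ∃ u : ℤˣ, ((u : ℤ) : ℝ) = x := by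
  rcases hx with rfl | rfl
  exacts [⟨1, by simp⟩, ⟨-1, by simp⟩]

lemma units_int_cast_eq_one_or (u : ℤˣ) : ((u : ℤ) : ℝ) = 1 ∨ ((u : ℤ) : ℝ) = -1 := by
  rcases Int.units_eq_one_or u with rfl | rfl <;> simp

lemma L0set_eq_convexHull_range_signTensor (d k : ℕ) :
    L0set d k = convexHull ℝ (range (signTensor (d := d) (k := k))) := by
  rw [L0set]
  congr 1
  ext x
  constructor
  · rintro ⟨w, z, hw, hz, rfl⟩
    choose u hu using fun s => exists_units_int_cast_eq (hw s)
    choose u' hu' using fun t => exists_units_int_cast_eq (hz t)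
    exact ⟨(u, u'), funext fun f => by simp [signTensor, hu, hu']⟩
  · rintro ⟨ε, rfl⟩
    exact ⟨fun s => ((ε.1 s : ℤ) : ℝ), fun t => ((ε.2 t : ℤ) : ℝ),
      fun s => units_int_cast_eq_one_or (ε.1 s), fun t => units_int_cast_eq_one_or (ε.2 t),
      funext fun f => by simp [signTensor]⟩

lemma log_card_signPattern_le {d : ℕ} (hd : 1 ≤ d) (k : ℕ) :
    log (Fintype.card (SignPattern d k)) ≤ 2 * (d : ℝ) ^ (k - k / 2) := by
  have hcard : Fintype.card (SignPattern d k) = 2 ^ (d ^ (k / 2) + d ^ (k - k / 2)) := by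
    simp [Fintype.card_prod, Fintype.card_units_int, pow_add]
  have hexp : d ^ (k / 2) + d ^ (k - k / 2) ≤ 2 * d ^ (k - k / 2) := by
    have := Nat.pow_le_pow_right hd (show k / 2 ≤ k - k / 2 by omega)
    omega
  rw [hcard, Nat.cast_pow, Nat.cast_ofNat, log_pow]
  calc ((d ^ (k / 2) + d ^ (k - k / 2) : ℕ) : ℝ) * log 2
      ≤ ((2 * d ^ (k - k / 2) : ℕ) : ℝ) * 1 :=
        mul_le_mul (by exact_mod_cast hexp) (by linarith [log_two_lt_d9])
          (log_nonneg one_le_two) (by positivity)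
    _ = _ := by push_cast; ring

lemma csSup_image_L0set (d k : ℕ) (c g : (Fin k → Fin d) → ℝ) :
    sSup ((fun h => ∑ f, g f * (c f * h f)) '' L0set d k) =
      Finset.univ.sup' univ_nonempty fun ε : SignPattern d k =>
        ∑ f, g f * (c f * signTensor ε f) := by
  set φ : ((Fin k → Fin d) → ℝ) → ℝ := fun h => ∑ f, g f * (c f * h f)
  have hlin : IsLinearMap ℝ φ :=
    ⟨fun _ _ => by simp only [φ, Pi.add_apply, mul_add, sum_add_distrib],
      fun _ _ => by
        simp only [φ, Pi.smul_apply, smul_eq_mul, mul_sum]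
        exact sum_congr rfl fun _ _ => by ring⟩
  rw [L0set_eq_convexHull_range_signTensor,
    csSup_image_convexHull_range (φ := φ) ((IsLinearMap.mk' φ hlin).convexOn convex_univ)]
  rfl

lemma hasSubgaussianMGF_sum_mul_sqrt_mul_signTensor {d k : ℕ} {p : (Fin k → Fin d) → ℝ}
    (hp0 : ∀ f, 0 ≤ p f) (hp1 : ∑ f, p f = 1) (ε : SignPattern d k) :
    HasSubgaussianMGF (fun g => ∑ f, g f * (√(p f) * signTensor ε f)) 1
      (Measure.pi fun _ : Fin k → Fin d => gaussianReal 0 1) := by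
  convert hasSubgaussianMGF_sum_mul_pi_gaussianReal fun f => √(p f) * signTensor ε f using 1
  · exact funext fun g => sum_congr rfl fun f _ => mul_comm _ _
  · exact NNReal.eq (by simp [mul_pow, sq_sqrt (hp0 _), signTensor_sq, hp1])

/-- There is a universal constant `C` such that for all `d, k ≥ 1` and every
probability vector `p` on `[d]^k`, the Gaussian mean width of `P^{1/2} L0` satisfies
`E_g sup_{h ∈ L0} ⟨g, P^{1/2} h⟩ ≤ C · d^{⌈k/2⌉/2}`, where `g` has i.i.d. `N(0,1)`
coordinates. -/
theorem stmt_5 : ∃ C : ℝ, 0 < C ∧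
    ∀ (d k : ℕ), 1 ≤ d → 1 ≤ k →
    ∀ p : (Fin k → Fin d) → ℝ, (∀ f, 0 ≤ p f) → (∑ f, p f = 1) →
      (∫ g : (Fin k → Fin d) → ℝ,
          sSup ((fun h => ∑ f, g f * (Real.sqrt (p f) * h f)) '' L0set d k)
          ∂(Measure.pi fun _ : Fin k → Fin d => gaussianReal 0 1)) ≤
        C * (d : ℝ) ^ (((k - k / 2 : ℕ) : ℝ) / 2) := by
  refine ⟨2, two_pos, fun d k hd _ p hp0 hp1 => ?_⟩
  set σ : ℝ := √d ^ (k - k / 2)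
  have hσ : 0 < σ := pow_pos (sqrt_pos.2 (by exact_mod_cast hd)) _
  have hσ_sq : σ ^ 2 = (d : ℝ) ^ (k - k / 2) := by
    rw [← pow_mul, mul_comm, pow_mul, sq_sqrt (Nat.cast_nonneg d)]
  calc _ = ∫ g, Finset.univ.sup' univ_nonempty
            (fun ε : SignPattern d k => ∑ f, g f * (√(p f) * signTensor ε f))
          ∂(Measure.pi fun _ : Fin k → Fin d => gaussianReal 0 1) :=
        integral_congr_ae (ae_of_all _ fun g => csSup_image_L0set d k (fun f => √(p f)) g)
    _ ≤ log #(Finset.univ : Finset (SignPattern d k)) / (2 * σ) + (1 : ℝ≥0) * (2 * σ) / 2 :=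
        integral_finset_sup'_le_of_hasSubgaussianMGF _
          (fun ε _ => hasSubgaussianMGF_sum_mul_sqrt_mul_signTensor hp0 hp1 ε) (by positivity)
    _ ≤ 2 * σ ^ 2 / (2 * σ) + σ := by
        rw [card_univ, hσ_sq, NNReal.coe_one, one_mul, mul_div_cancel_left₀ σ two_ne_zero]
        gcongr
        exact log_card_signPattern_le hd k
    _ = 2 * (d : ℝ) ^ (((k - k / 2 : ℕ) : ℝ) / 2) := by
        rw [rpow_div_two_eq_sqrt _ (Nat.cast_nonneg d), rpow_natCast]
        field_simp
        ring
end

section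
/- Let H be a real n₁ × n₂ matrix. The following are equivalent: (i) there exist an integer N and unit vectors u_1,…,u_{n₁} ∈ ℝ^N and v_1,…,v_{n₂} ∈ ℝ^N with H_{ij} = ⟨u_i, v_j⟩ for all i, j; (ii) there exists a symmetric positive semidefinite matrix M ∈ ℝ^{(n₁+n₂)×(n₁+n₂)} with all diagonal entries equal to 1 whose top-right n₁ × n₂ block is H (that is, M_{i, n₁+j} = H_{ij} for all i ∈ [n₁], j ∈ [n₂]). Consequently, the set of matrices H satisfying (i) is a convex set. -/
/-!
A positive semidefinite matrix factors as `M = Bᵀ B`, so it is the Gram matrix of the columns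
of `B`, and its diagonal is `1` exactly when these vectors are unit vectors. Hence the matrices
`(⟨u_i, v_j⟩)` are precisely the top-right blocks of the elliptope
`{M ⪰ 0 | M_ii = 1}`, and they form a convex set as a linear image of this convex set.
-/

open Finset Matrix

def IsUnitInnerProductMatrix {m n : Type*} (H : Matrix m n ℝ) : Prop :=
  ∃ N : ℕ, ∃ u : m → (Fin N → ℝ), ∃ v : n → (Fin N → ℝ),
    (∀ i, ∑ k, (u i k) ^ 2 = 1) ∧ (∀ j, ∑ k, (v j k) ^ 2 = 1) ∧ ∀ i j, H i j = ∑ k, u i k * v j k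

open scoped MatrixOrder in
theorem Matrix.PosSemidef.exists_eq_sum_mul {ι : Type*} [Fintype ι] {M : Matrix ι ι ℝ}
    (hM : M.PosSemidef) :
    ∃ w : ι → Fin (Fintype.card ι) → ℝ, ∀ i j, M i j = ∑ k, w i k * w j k := by
  classical
  obtain ⟨B, rfl⟩ := CStarAlgebra.nonneg_iff_eq_star_mul_self.mp hM.nonneg
  refine ⟨fun i k => B ((Fintype.equivFin ι).symm k) i, fun i j => ?_⟩
  rw [star_eq_conjTranspose, mul_apply, ← (Fintype.equivFin ι).symm.sum_comp]
  simp

theorem Matrix.posSemidef_of_sum_mul {ι : Type*} [Fintype ι] {N : ℕ} (w : ι → Fin N → ℝ) :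
    (of fun i j => ∑ k, w i k * w j k).PosSemidef := by
  convert posSemidef_self_mul_conjTranspose (of w) using 1
  ext i j
  simp [mul_apply]

theorem convex_setOf_posSemidef_diag_eq_one (ι : Type*) [Fintype ι] :
    Convex ℝ {M : Matrix ι ι ℝ | M.PosSemidef ∧ ∀ i, M i i = 1} := by
  rintro M₁ ⟨hM₁, hd₁⟩ M₂ ⟨hM₂, hd₂⟩ a b ha hb hab
  refine ⟨(hM₁.smul ha).add (hM₂.smul hb), fun i => ?_⟩
  simp [hd₁ i, hd₂ i, hab]

theorem isUnitInnerProductMatrix_iff_exists_posSemidef {n₁ n₂ : ℕ}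
    (H : Matrix (Fin n₁) (Fin n₂) ℝ) :
    IsUnitInnerProductMatrix H ↔
      ∃ M : Matrix (Fin (n₁ + n₂)) (Fin (n₁ + n₂)) ℝ, M.PosSemidef ∧ (∀ i, M i i = 1) ∧
        ∀ i j, M (Fin.castAdd n₂ i) (Fin.natAdd n₁ j) = H i j := by
  constructor
  · rintro ⟨N, u, v, hu, hv, hH⟩
    let w : Fin (n₁ + n₂) → Fin N → ℝ := Fin.addCases u v
    refine ⟨of fun i j => ∑ k, w i k * w j k, posSemidef_of_sum_mul w, fun i => ?_,
      fun i j => by simp [w, hH]⟩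
    induction i using Fin.addCases <;> simp [w, ← sq, hu, hv]
  · rintro ⟨M, hM, hdiag, hblock⟩
    obtain ⟨w, hw⟩ := hM.exists_eq_sum_mul
    refine ⟨_, fun i => w (Fin.castAdd n₂ i), fun j => w (Fin.natAdd n₁ j), fun i => ?_,
      fun j => ?_, fun i j => by rw [← hblock, hw]⟩ <;> simp only [sq, ← hw, hdiag]

theorem convex_setOf_isUnitInnerProductMatrix (n₁ n₂ : ℕ) :
    Convex ℝ {H : Matrix (Fin n₁) (Fin n₂) ℝ | IsUnitInnerProductMatrix H} := by
  let block : Matrix (Fin (n₁ + n₂)) (Fin (n₁ + n₂)) ℝ →ₗ[ℝ] Matrix (Fin n₁) (Fin n₂) ℝ :=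
    { toFun := fun M => M.submatrix (Fin.castAdd n₂) (Fin.natAdd n₁)
      map_add' := fun _ _ => rfl
      map_smul' := fun _ _ => rfl }
  have h_image : {H | IsUnitInnerProductMatrix H} =
      block '' {M | M.PosSemidef ∧ ∀ i, M i i = 1} := by
    refine Set.ext fun H => (isUnitInnerProductMatrix_iff_exists_posSemidef H).trans ?_
    simp only [Set.mem_image, Set.mem_ofPred_eq, ← Matrix.ext_iff, and_assoc]
    rfl
  exact h_image ▸ (convex_setOf_posSemidef_diag_eq_one _).linear_image block

/-- For a real `n₁ × n₂` matrix `H`, the following are equivalent: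
(i) there exist `N` and unit vectors `u_i, v_j ∈ ℝ^N` with `H_{ij} = ⟨u_i, v_j⟩`;
(ii) there exists a (symmetric) positive semidefinite `(n₁+n₂) × (n₁+n₂)` matrix `M`
with unit diagonal whose top-right `n₁ × n₂` block is `H`.
Consequently the set of matrices satisfying (i) is convex. -/
theorem stmt_8 (n₁ n₂ : ℕ) :
    (∀ H : Matrix (Fin n₁) (Fin n₂) ℝ,
      (∃ N : ℕ, ∃ u : Fin n₁ → (Fin N → ℝ), ∃ v : Fin n₂ → (Fin N → ℝ),
        (∀ i, ∑ n, (u i n) ^ 2 = 1) ∧ (∀ j, ∑ n, (v j n) ^ 2 = 1) ∧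
        ∀ i j, H i j = ∑ n, u i n * v j n) ↔
      (∃ M : Matrix (Fin (n₁ + n₂)) (Fin (n₁ + n₂)) ℝ,
        M.PosSemidef ∧ (∀ i, M i i = 1) ∧
        ∀ i j, M (Fin.castAdd n₂ i) (Fin.natAdd n₁ j) = H i j)) ∧
    Convex ℝ {H : Matrix (Fin n₁) (Fin n₂) ℝ |
      ∃ N : ℕ, ∃ u : Fin n₁ → (Fin N → ℝ), ∃ v : Fin n₂ → (Fin N → ℝ),
        (∀ i, ∑ n, (u i n) ^ 2 = 1) ∧ (∀ j, ∑ n, (v j n) ^ 2 = 1) ∧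
        ∀ i j, H i j = ∑ n, u i n * v j n} :=
  ⟨isUnitInnerProductMatrix_iff_exists_posSemidef, convex_setOf_isUnitInnerProductMatrix n₁ n₂⟩
end

section
/- There exists a universal constant C (independent of d and k) such that for all integers d ≥ 1 and k ≥ 1, L ⊆ C · L0; equivalently, for every g ∈ ℝ^{[d]^k}, sup_{h ∈ L} ⟨g, h⟩ ≤ C · sup_{h ∈ L0} ⟨g, h⟩. -/
/-!
Work with `L` and `L0` for matrices indexed by `S × T`; the tensors of the statement are such
matrices, indexed by the two halves of a `k`-tuple. For unit vectors `u_s, v_t ∈ ℝ^N` the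
Rademacher sums `X_s(σ) = ∑ₙ σₙ u_{s,n}` (`σ ∈ {±1}^N` uniform) satisfy `𝔼 X_s Y_t = ⟨u_s, v_t⟩`,
`𝔼 X_s² = 1` and `𝔼 X_s⁴ ≤ 3`. Split `X = X₀ + X₁` where `X₀` is `X` truncated at level `4`, so
that `𝔼 X₁² ≤ 𝔼 X⁴ / 256 ≤ 1 / 64`. Then `𝔼 X₀ Y₀` is an average of rank-one matrices with
entries bounded by `4`, hence lies in `16 • L0`, while the three other terms are Gram matrices of
vectors of norms at most `(1, 1/8)`, `(1/8, 1)` and `(1/8, 1/8)`. So `L ⊆ C • L0` implies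
`L ⊆ (16 + C / 2) • L0`, and iterating from the trivial bound `L ⊆ |S| • L0` gives `L ⊆ 33 • L0`.
-/

open Finset Pointwise

/-- `L ⊆ ℝ^{[d]^k}`: all `h` such that `h_{s·t} = ⟨u_s, v_t⟩` for some unit vectors
`u_s, v_t` in some `ℝ^N`. -/
def Lset (d k : ℕ) : Set ((Fin k → Fin d) → ℝ) :=
  {h | ∃ N : ℕ, ∃ u : (Fin (k / 2) → Fin d) → (Fin N → ℝ),
    ∃ v : (Fin (k - k / 2) → Fin d) → (Fin N → ℝ),
      (∀ s, ∑ n, (u s n) ^ 2 = 1) ∧ (∀ t, ∑ n, (v t n) ^ 2 = 1) ∧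
      ∀ f, h f = ∑ n, u (tupHead f) n * v (tupTail f) n}

open Matrix

section Convex

variable {𝕜 E F G : Type*} [Field 𝕜] [LinearOrder 𝕜]
  [AddCommGroup E] [Module 𝕜 E] [AddCommGroup F] [Module 𝕜 F] [AddCommGroup G] [Module 𝕜 G]

theorem LinearMap.image2_convexHull_subset (f : E →ₗ[𝕜] F →ₗ[𝕜] G) (s : Set E) (t : Set F) :
    Set.image2 (fun x y => f x y) (convexHull 𝕜 s) (convexHull 𝕜 t) ⊆
      convexHull 𝕜 (Set.image2 (fun x y => f x y) s t) := by
  rintro _ ⟨x, hx, y, hy, rfl⟩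
  have hconv := convex_convexHull 𝕜 (Set.image2 (fun x y => f x y) s t)
  have hleft : ∀ y ∈ t, convexHull 𝕜 s ⊆ f.flip y ⁻¹' convexHull 𝕜 (Set.image2 _ s t) :=
    fun y hy => convexHull_min (fun x hx => subset_convexHull 𝕜 _ (Set.mem_image2_of_mem hx hy))
      (hconv.linear_preimage _)
  exact convexHull_min (fun y hy => hleft y hy hx) (hconv.linear_preimage (f x)) hy

variable [IsStrictOrderedRing 𝕜] {s : Set E}

theorem Convex.smul_set_subset_smul_set (hs : Convex 𝕜 s) (h0 : 0 ∈ s) {a b : 𝕜}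
    (ha : 0 ≤ a) (hab : a ≤ b) : a • s ⊆ b • s := by
  rw [show b = a + (b - a) by ring, hs.add_smul ha (sub_nonneg.2 hab)]
  exact Set.subset_add_left _ (Set.zero_mem_smul_set h0)

theorem Convex.add_mem_smul_set (hs : Convex 𝕜 s) {a b : 𝕜} (ha : 0 ≤ a) (hb : 0 ≤ b)
    {x y : E} (hx : x ∈ a • s) (hy : y ∈ b • s) : x + y ∈ (a + b) • s := by
  rw [hs.add_smul ha hb]
  exact Set.add_mem_add hx hy

end Convex

section SignRankOneHull

variable {S T : Type*}

noncomputable def signRankOneHull (S T : Type*) : Set (Matrix S T ℝ) :=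
  convexHull ℝ (Set.image2 vecMulVec (Set.univ.pi fun _ => {-1, 1}) (Set.univ.pi fun _ => {-1, 1}))

theorem convex_signRankOneHull : Convex ℝ (signRankOneHull S T) := convex_convexHull ℝ _

theorem mem_convexHull_signVectors [Finite S] {w : S → ℝ} (hw : ∀ s, |w s| ≤ 1) :
    w ∈ convexHull ℝ (Set.univ.pi fun _ => ({-1, 1} : Set ℝ)) :=
  mem_convexHull_pi fun s _ => by
    rw [convexHull_pair, segment_eq_Icc (by norm_num)]
    exact abs_le.1 (hw s)

variable [Finite S] [Finite T]

theorem vecMulVec_mem_signRankOneHull {w : S → ℝ} {z : T → ℝ} (hw : ∀ s, |w s| ≤ 1)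
    (hz : ∀ t, |z t| ≤ 1) : vecMulVec w z ∈ signRankOneHull S T :=
  (vecMulVecBilin ℝ ℝ : (S → ℝ) →ₗ[ℝ] (T → ℝ) →ₗ[ℝ] _).image2_convexHull_subset _ _
    ⟨w, mem_convexHull_signVectors hw, z, mem_convexHull_signVectors hz, rfl⟩

theorem zero_mem_signRankOneHull : 0 ∈ signRankOneHull S T := by
  simpa using vecMulVec_mem_signRankOneHull (w := (0 : S → ℝ)) (z := (0 : T → ℝ))
    (by simp) (by simp)

theorem inv_card_smul_mul_transpose_mem_signRankOneHull {ι : Type*} [Fintype ι] [Nonempty ι]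
    {a : Matrix S ι ℝ} {b : Matrix T ι ℝ} (ha : ∀ s i, |a s i| ≤ 1) (hb : ∀ t i, |b t i| ≤ 1) :
    (Fintype.card ι : ℝ)⁻¹ • (a * bᵀ) ∈ signRankOneHull S T := by
  have hsum : a * bᵀ = ∑ i, vecMulVec (fun s => a s i) (fun t => b t i) := by
    ext s t
    simp [mul_apply, vecMulVec_apply, Matrix.sum_apply]
  rw [hsum, Finset.smul_sum]
  refine convex_signRankOneHull.sum_mem (fun _ _ => by positivity) (by simp)
    fun i _ => vecMulVec_mem_signRankOneHull (fun s => ha s i) (fun t => hb t i)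

end SignRankOneHull

theorem sum_sq_inv_mul_le_one {ι : Type*} [Fintype ι] {c : ℝ} (hc : 0 < c) {x : ι → ℝ}
    (hx : ∑ i, x i ^ 2 ≤ c ^ 2) : ∑ i, (c⁻¹ * x i) ^ 2 ≤ 1 := by
  simp only [mul_pow, ← Finset.mul_sum, inv_pow]
  rwa [inv_mul_le_one₀ (by positivity)]

section UnitGramSet

variable {S T : Type*}

def unitGramSet (S T : Type*) : Set (Matrix S T ℝ) :=
  {h | ∃ (N : ℕ) (u : Matrix S (Fin N) ℝ) (v : Matrix T (Fin N) ℝ),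
    (∀ s, ∑ n, u s n ^ 2 = 1) ∧ (∀ t, ∑ n, v t n ^ 2 = 1) ∧ h = u * vᵀ}

theorem abs_le_one_of_mem_unitGramSet {h : Matrix S T ℝ} (hh : h ∈ unitGramSet S T) (s : S)
    (t : T) : |h s t| ≤ 1 := by
  obtain ⟨N, u, v, hu, hv, rfl⟩ := hh
  have := Finset.sum_mul_sq_le_sq_mul_sq univ (u s) (v t)
  rw [hu, hv, one_mul] at this
  simpa [mul_apply] using this

theorem mul_transpose_mem_unitGramSet {ι : Type*} [Fintype ι] {u : Matrix S ι ℝ}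
    {v : Matrix T ι ℝ} (hu : ∀ s, ∑ i, u s i ^ 2 = 1) (hv : ∀ t, ∑ i, v t i ^ 2 = 1) :
    u * vᵀ ∈ unitGramSet S T := by
  let e := Fintype.equivFin ι
  refine ⟨Fintype.card ι, u.submatrix id e.symm, v.submatrix id e.symm, fun s => ?_,
    fun t => ?_, ?_⟩
  · simpa [← hu s] using e.symm.sum_comp (fun i => u s i ^ 2)
  · simpa [← hv t] using e.symm.sum_comp (fun i => v t i ^ 2)
  · ext s t
    simpa [mul_apply] using (e.symm.sum_comp (fun i => u s i * v t i)).symm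

variable [Fintype S] [Fintype T]

theorem mul_transpose_mem_unitGramSet_of_le {ι : Type*} [Fintype ι] {a : Matrix S ι ℝ}
    {b : Matrix T ι ℝ} (ha : ∀ s, ∑ i, a s i ^ 2 ≤ 1) (hb : ∀ t, ∑ i, b t i ^ 2 ≤ 1) :
    a * bᵀ ∈ unitGramSet S T := by
  classical
  -- pad with private coordinates that make every row a unit vector
  let u : Matrix S (ι ⊕ S ⊕ T) ℝ := of fun s =>
    Sum.elim (a s) (Sum.elim (Pi.single s √(1 - ∑ i, a s i ^ 2)) 0)
  let v : Matrix T (ι ⊕ S ⊕ T) ℝ := of fun t =>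
    Sum.elim (b t) (Sum.elim 0 (Pi.single t √(1 - ∑ i, b t i ^ 2)))
  have huv : a * bᵀ = u * vᵀ := by
    ext s t
    simp [u, v, mul_apply, Fintype.sum_sum_type]
  rw [huv]
  refine mul_transpose_mem_unitGramSet (fun s => ?_) (fun t => ?_)
  · simp [u, Fintype.sum_sum_type, Pi.single_apply, Real.sq_sqrt (sub_nonneg.2 (ha s))]
  · simp [v, Fintype.sum_sum_type, Pi.single_apply, Real.sq_sqrt (sub_nonneg.2 (hb t))]

theorem inv_smul_mul_transpose_mem_smul_unitGramSet {ι : Type*} [Fintype ι] {κ A B : ℝ}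
    (hκ : 0 < κ) (hA : 0 < A) (hB : 0 < B) {a : Matrix S ι ℝ} {b : Matrix T ι ℝ}
    (ha : ∀ s, ∑ i, a s i ^ 2 ≤ κ * A ^ 2) (hb : ∀ t, ∑ i, b t i ^ 2 ≤ κ * B ^ 2) :
    κ⁻¹ • (a * bᵀ) ∈ (A * B) • unitGramSet S T := by
  have hsq : ∀ C : ℝ, (√κ * C) ^ 2 = κ * C ^ 2 := fun C => by
    rw [mul_pow, Real.sq_sqrt hκ.le]
  refine ⟨_, mul_transpose_mem_unitGramSet_of_le (a := (√κ * A)⁻¹ • a) (b := (√κ * B)⁻¹ • b)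
    (fun s => sum_sq_inv_mul_le_one (by positivity) ((hsq A).symm ▸ ha s))
    (fun t => sum_sq_inv_mul_le_one (by positivity) ((hsq B).symm ▸ hb t)), ?_⟩
  change (A * B) • _ = _
  rw [transpose_smul, Matrix.smul_mul, Matrix.mul_smul, smul_smul, smul_smul]
  congr 1
  field_simp
  exact (Real.sq_sqrt hκ.le).symm

end UnitGramSet

section Truncate

noncomputable def truncate (M x : ℝ) : ℝ := max (-M) (min M x)

variable {M : ℝ}

theorem abs_truncate_le (hM : 0 ≤ M) (x : ℝ) : |truncate M x| ≤ M :=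
  abs_le.2 ⟨le_max_left _ _, max_le (by linarith) (min_le_left _ _)⟩

theorem sq_truncate_le (hM : 0 ≤ M) (x : ℝ) : truncate M x ^ 2 ≤ x ^ 2 := by
  unfold truncate
  rcases le_total x (-M) with h | h
  · rw [min_eq_right (by linarith), max_eq_left h]; nlinarith
  rcases le_total M x with h' | h'
  · rw [min_eq_left h', max_eq_right (by linarith)]; nlinarith
  · rw [min_eq_right h', max_eq_right h]

theorem abs_sub_truncate_le (hM : 0 < M) (x : ℝ) : |x - truncate M x| ≤ x ^ 2 / (4 * M) := by
  rw [le_div_iff₀ (by positivity)]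
  unfold truncate
  rcases le_total x (-M) with h | h
  · rw [min_eq_right (by linarith), max_eq_left h, abs_of_nonpos (by linarith)]
    nlinarith [sq_nonneg (x + 2 * M)]
  rcases le_total M x with h' | h'
  · rw [min_eq_left h', max_eq_right (by linarith), abs_of_nonneg (by linarith)]
    nlinarith [sq_nonneg (x - 2 * M)]
  · rw [min_eq_right h', max_eq_right h, sub_self, abs_zero, zero_mul]
    positivity

theorem sq_sub_truncate_le (hM : 0 < M) (x : ℝ) :
    (x - truncate M x) ^ 2 ≤ x ^ 4 / (16 * M ^ 2) :=
  calc (x - truncate M x) ^ 2 = |x - truncate M x| ^ 2 := (sq_abs _).symm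
    _ ≤ (x ^ 2 / (4 * M)) ^ 2 := pow_le_pow_left₀ (abs_nonneg _) (abs_sub_truncate_le hM x) 2
    _ = x ^ 4 / (16 * M ^ 2) := by ring

theorem inv_card_smul_map_truncate_mem_smul_signRankOneHull {S T ι : Type*} [Finite S]
    [Finite T] [Fintype ι] [Nonempty ι] (hM : 0 < M) (a : Matrix S ι ℝ) (b : Matrix T ι ℝ) :
    (Fintype.card ι : ℝ)⁻¹ • (a.map (truncate M) * (b.map (truncate M))ᵀ) ∈
      (M ^ 2) • signRankOneHull S T := by
  have hbound (x : ℝ) : |M⁻¹ * truncate M x| ≤ 1 := by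
    rw [abs_mul, abs_of_pos (inv_pos.2 hM), inv_mul_le_one₀ hM]
    exact abs_truncate_le hM.le x
  refine ⟨_, inv_card_smul_mul_transpose_mem_signRankOneHull (a := M⁻¹ • a.map (truncate M))
    (b := M⁻¹ • b.map (truncate M)) (fun _ _ => hbound _) (fun _ _ => hbound _), ?_⟩
  simp only [transpose_smul, Matrix.smul_mul, Matrix.mul_smul, smul_smul]
  congr 1
  field_simp

end Truncate

section Rademacher

def boolSign (b : Bool) : ℝ := if b then 1 else -1

def rademacherSum {N : ℕ} (u : Fin N → ℝ) (σ : Fin N → Bool) : ℝ := ∑ n, boolSign (σ n) * u n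

theorem rademacherSum_cons {N : ℕ} (u : Fin (N + 1) → ℝ) (b : Bool) (σ : Fin N → Bool) :
    rademacherSum u (Fin.cons b σ) = boolSign b * u 0 + rademacherSum (Fin.tail u) σ := by
  simp [rademacherSum, Fin.sum_univ_succ, Fin.tail]

theorem sum_pi_fin_succ_bool {N : ℕ} (F : (Fin (N + 1) → Bool) → ℝ) :
    ∑ σ, F σ = ∑ σ : Fin N → Bool, (F (Fin.cons true σ) + F (Fin.cons false σ)) := by
  rw [← (Fin.consEquiv fun _ => Bool).sum_comp, Fintype.sum_prod_type, Fintype.sum_bool,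
    ← Finset.sum_add_distrib]
  rfl

theorem sum_rademacherSum_mul {N : ℕ} (u v : Fin N → ℝ) :
    ∑ σ, rademacherSum u σ * rademacherSum v σ = 2 ^ N * ∑ n, u n * v n := by
  induction N with
  | zero => simp [rademacherSum]
  | succ N ih =>
    calc ∑ σ, rademacherSum u σ * rademacherSum v σ
        = ∑ σ : Fin N → Bool, (2 * (u 0 * v 0) +
            2 * (rademacherSum (Fin.tail u) σ * rademacherSum (Fin.tail v) σ)) := by
          rw [sum_pi_fin_succ_bool]
          refine Finset.sum_congr rfl fun σ _ => ?_
          simp [rademacherSum_cons, boolSign]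
          ring
      _ = 2 ^ (N + 1) * ∑ n, u n * v n := by
          rw [sum_add_distrib, sum_const, ← mul_sum, ih, Fin.sum_univ_succ]
          simp [Fin.tail]
          ring

theorem sum_rademacherSum_pow_four_le {N : ℕ} (u : Fin N → ℝ) :
    ∑ σ, rademacherSum u σ ^ 4 ≤ 3 * 2 ^ N * (∑ n, u n ^ 2) ^ 2 := by
  induction N with
  | zero => simp [rademacherSum]
  | succ N ih =>
    set Y := rademacherSum (Fin.tail u)
    have h2 : ∑ σ, Y σ ^ 2 = 2 ^ N * ∑ n : Fin N, u n.succ ^ 2 := by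
      simp only [sq]
      exact sum_rademacherSum_mul (Fin.tail u) (Fin.tail u)
    have h4 : ∑ σ, Y σ ^ 4 ≤ 3 * 2 ^ N * (∑ n : Fin N, u n.succ ^ 2) ^ 2 := ih (Fin.tail u)
    calc ∑ σ, rademacherSum u σ ^ 4
        = ∑ σ, (2 * Y σ ^ 4 + 12 * u 0 ^ 2 * Y σ ^ 2 + 2 * u 0 ^ 4) := by
          rw [sum_pi_fin_succ_bool]
          refine Finset.sum_congr rfl fun σ _ => ?_
          simp [Y, rademacherSum_cons, boolSign]
          ring
      _ = 2 * ∑ σ, Y σ ^ 4 + 12 * u 0 ^ 2 * (2 ^ N * ∑ n : Fin N, u n.succ ^ 2) +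
            2 * 2 ^ N * u 0 ^ 4 := by
          rw [sum_add_distrib, sum_add_distrib, sum_const, ← mul_sum, ← mul_sum, h2]
          simp
          ring
      _ ≤ 3 * 2 ^ (N + 1) * (∑ n, u n ^ 2) ^ 2 := by
          have : (0 : ℝ) ≤ 2 ^ N * u 0 ^ 4 := by positivity
          rw [Fin.sum_univ_succ, pow_succ 2 N]
          nlinarith

variable {N : ℕ} {u : Fin N → ℝ}

theorem sum_sq_truncate_rademacherSum_le (hu : ∑ n, u n ^ 2 = 1) :
    ∑ σ, truncate 4 (rademacherSum u σ) ^ 2 ≤ 2 ^ N * 1 ^ 2 :=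
  calc ∑ σ, truncate 4 (rademacherSum u σ) ^ 2 ≤ ∑ σ, rademacherSum u σ ^ 2 :=
        sum_le_sum fun σ _ => sq_truncate_le (by norm_num) _
    _ = 2 ^ N * 1 ^ 2 := by
        simpa only [← sq, hu, one_pow] using sum_rademacherSum_mul u u

theorem sum_sq_sub_truncate_rademacherSum_le (hu : ∑ n, u n ^ 2 = 1) :
    ∑ σ, (rademacherSum u σ - truncate 4 (rademacherSum u σ)) ^ 2 ≤ 2 ^ N * (1 / 8) ^ 2 :=
  calc ∑ σ, (rademacherSum u σ - truncate 4 (rademacherSum u σ)) ^ 2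
      ≤ ∑ σ, rademacherSum u σ ^ 4 / (16 * 4 ^ 2) :=
        sum_le_sum fun σ _ => sq_sub_truncate_le (by norm_num) _
    _ ≤ 3 * 2 ^ N * 1 ^ 2 / (16 * 4 ^ 2) := by
        rw [← sum_div, ← hu]
        gcongr
        exact sum_rademacherSum_pow_four_le u
    _ ≤ 2 ^ N * (1 / 8) ^ 2 := by
        have : (0 : ℝ) ≤ 2 ^ N := by positivity
        linarith

end Rademacher

section Bootstrap

variable {S T : Type*} [Fintype S] [Fintype T]

theorem unitGramSet_subset_card_smul :
    unitGramSet S T ⊆ (Fintype.card S : ℝ) • signRankOneHull S T := by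
  classical
  intro h hh
  rcases isEmpty_or_nonempty S with hS | hS
  · rw [Subsingleton.elim h 0]
    exact Set.zero_mem_smul_set zero_mem_signRankOneHull
  have hmem := inv_card_smul_mul_transpose_mem_signRankOneHull (a := (1 : Matrix S S ℝ))
    (b := hᵀ) (fun s i => by by_cases hsi : s = i <;> simp [one_apply, hsi])
    (fun t i => abs_le_one_of_mem_unitGramSet hh i t)
  rw [Matrix.one_mul, transpose_transpose] at hmem
  exact ⟨_, hmem, smul_inv_smul₀ (by positivity) h⟩

theorem inv_smul_mul_transpose_mem_smul_signRankOneHull {C : ℝ}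
    (hL : unitGramSet S T ⊆ C • signRankOneHull S T) {ι : Type*} [Fintype ι] {κ A B : ℝ}
    (hκ : 0 < κ) (hA : 0 < A) (hB : 0 < B) {a : Matrix S ι ℝ} {b : Matrix T ι ℝ}
    (ha : ∀ s, ∑ i, a s i ^ 2 ≤ κ * A ^ 2) (hb : ∀ t, ∑ i, b t i ^ 2 ≤ κ * B ^ 2) :
    κ⁻¹ • (a * bᵀ) ∈ (A * B * C) • signRankOneHull S T := by
  rw [mul_smul]
  exact Set.smul_set_mono hL (inv_smul_mul_transpose_mem_smul_unitGramSet hκ hA hB ha hb)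

theorem unitGramSet_subset_smul_of_subset {C : ℝ} (hC : 0 ≤ C)
    (hL : unitGramSet S T ⊆ C • signRankOneHull S T) :
    unitGramSet S T ⊆ (16 + C / 2) • signRankOneHull S T := by
  rintro _ ⟨N, u, v, hu, hv, rfl⟩
  have hκ : (0 : ℝ) < 2 ^ N := by positivity
  let X : Matrix S (Fin N → Bool) ℝ := of fun s => rademacherSum (u s)
  let Y : Matrix T (Fin N → Bool) ℝ := of fun t => rademacherSum (v t)
  let X₀ := X.map (truncate 4)
  let Y₀ := Y.map (truncate 4)
  have hXY : u * vᵀ = (2 ^ N : ℝ)⁻¹ • (X * Yᵀ) := by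
    ext s t
    simp [X, Y, mul_apply, sum_rademacherSum_mul, hκ.ne']
  have hsplit :
      X * Yᵀ = X₀ * Y₀ᵀ + X₀ * (Y - Y₀)ᵀ + (X - X₀) * Y₀ᵀ + (X - X₀) * (Y - Y₀)ᵀ := by
    simp only [transpose_sub, Matrix.mul_sub, Matrix.sub_mul]
    abel
  have h₀ : (2 ^ N : ℝ)⁻¹ • (X₀ * Y₀ᵀ) ∈ (4 ^ 2 : ℝ) • signRankOneHull S T := by
    simpa using inv_card_smul_map_truncate_mem_smul_signRankOneHull (by norm_num) X Y
  have hX₀ s := sum_sq_truncate_rademacherSum_le (hu s)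
  have hY₀ t := sum_sq_truncate_rademacherSum_le (hv t)
  have hX₁ s := sum_sq_sub_truncate_rademacherSum_le (hu s)
  have hY₁ t := sum_sq_sub_truncate_rademacherSum_le (hv t)
  have hconv := convex_signRankOneHull (S := S) (T := T)
  have hmem := hconv.add_mem_smul_set (by positivity) (by positivity)
    (hconv.add_mem_smul_set (by positivity) (by positivity)
      (hconv.add_mem_smul_set (by positivity) (by positivity) h₀
        (inv_smul_mul_transpose_mem_smul_signRankOneHull hL hκ one_pos (by norm_num) hX₀ hY₁))
      (inv_smul_mul_transpose_mem_smul_signRankOneHull hL hκ (by norm_num) one_pos hX₁ hY₀))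
    (inv_smul_mul_transpose_mem_smul_signRankOneHull hL hκ (by norm_num) (by norm_num) hX₁ hY₁)
  rw [hXY, hsplit, smul_add, smul_add, smul_add]
  exact hconv.smul_set_subset_smul_set zero_mem_signRankOneHull (by positivity) (by linarith) hmem

theorem unitGramSet_subset_smul_pow (n : ℕ) :
    unitGramSet S T ⊆ (32 + Fintype.card S / 2 ^ n : ℝ) • signRankOneHull S T := by
  induction n with
  | zero =>
    exact unitGramSet_subset_card_smul.trans <| convex_signRankOneHull.smul_set_subset_smul_set
      zero_mem_signRankOneHull (by positivity) (by simp)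
  | succ n ih =>
    convert unitGramSet_subset_smul_of_subset (by positivity) ih using 2
    ring

theorem unitGramSet_subset_smul_signRankOneHull :
    unitGramSet S T ⊆ (33 : ℝ) • signRankOneHull S T := by
  refine (unitGramSet_subset_smul_pow (Fintype.card S)).trans <|
    convex_signRankOneHull.smul_set_subset_smul_set zero_mem_signRankOneHull (by positivity) ?_
  have : (Fintype.card S : ℝ) ≤ 2 ^ Fintype.card S := by exact_mod_cast Nat.lt_two_pow_self.le
  linarith [div_le_one_of_le₀ this (by positivity)]

end Bootstrap

def tensorOfMatrix (d k : ℕ) :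
    Matrix (Fin (k / 2) → Fin d) (Fin (k - k / 2) → Fin d) ℝ →ₗ[ℝ] (Fin k → Fin d) → ℝ where
  toFun M f := M (tupHead f) (tupTail f)
  map_add' _ _ := rfl
  map_smul' _ _ := rfl

theorem Lset_subset_image_unitGramSet {d k : ℕ} :
    Lset d k ⊆ tensorOfMatrix d k '' unitGramSet _ _ := by
  rintro h ⟨N, u, v, hu, hv, hh⟩
  exact ⟨of u * (of v)ᵀ, ⟨N, of u, of v, hu, hv, rfl⟩, funext fun f => (hh f).symm⟩

theorem image_signRankOneHull_subset_L0set {d k : ℕ} :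
    tensorOfMatrix d k '' signRankOneHull _ _ ⊆ L0set d k := by
  rw [signRankOneHull, LinearMap.image_convexHull]
  refine convexHull_mono ?_
  rintro _ ⟨_, ⟨w, hw, z, hz, rfl⟩, rfl⟩
  exact ⟨w, z, fun s => by simpa [or_comm] using hw s trivial,
    fun t => by simpa [or_comm] using hz t trivial, rfl⟩

/-- There is a universal constant `C > 0` (independent of `d` and `k`)
such that `L ⊆ C · L0` for all `d, k ≥ 1`. -/
theorem stmt_9 : ∃ C : ℝ, 0 < C ∧
    ∀ (d k : ℕ), 1 ≤ d → 1 ≤ k → Lset d k ⊆ C • L0set d k := by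
  refine ⟨33, by norm_num, fun d k _ _ => ?_⟩
  calc Lset d k ⊆ tensorOfMatrix d k '' unitGramSet _ _ := Lset_subset_image_unitGramSet
    _ ⊆ tensorOfMatrix d k '' ((33 : ℝ) • signRankOneHull _ _) :=
      Set.image_mono unitGramSet_subset_smul_signRankOneHull
    _ = (33 : ℝ) • tensorOfMatrix d k '' signRankOneHull _ _ := image_smul_set _ _ _
    _ ⊆ (33 : ℝ) • L0set d k := Set.smul_set_mono image_signRankOneHull_subset_L0set
end

section
/- (Frank–Wolfe convergence) Let F ⊆ ℝ^m be a nonempty compact convex set, let r ∈ ℝ^m, and let q* be a point of F minimizing ‖r − q‖₂² over q ∈ F. Suppose sequences (q_t)_{t≥0} in F, (v_t)_{t≥1} in F, and (α_t)_{t≥1} in [0,1] satisfy: q_0 ∈ F is arbitrary; for each t ≥ 1, v_t maximizes ⟨r − q_{t−1}, v⟩ over v ∈ F, α_t minimizes α ↦ ‖r − α q_{t−1} − (1−α) v_t‖₂² over α ∈ [0,1], and q_t = α_t q_{t−1} + (1−α_t) v_t. Then for every T ≥ 1, ‖r − q_T‖₂² ≤ ‖r − q*‖₂² + 4 · diam(F)²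 / (T + 3). -/
open scoped RealInnerProductSpace

/-- Frank–Wolfe convergence: Let `F ⊆ ℝ^m` be nonempty compact convex,
`r ∈ ℝ^m`, and `q*` a minimizer of `‖r − q‖₂²` over `F`. If the iterates `q_t` are
produced by the Frank–Wolfe rule (with `v_t` maximizing `⟨r − q_{t−1}, ·⟩` over `F`,
`α_t` the optimal step in `[0,1]`, and `q_t = α_t q_{t−1} + (1−α_t) v_t`), then for
every `T ≥ 1`, `‖r − q_T‖₂² ≤ ‖r − q*‖₂² + 4 diam(F)² / (T+3)`. -/
theorem stmt_12 {m : ℕ} (F : Set (EuclideanSpace ℝ (Fin m)))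
    (hne : F.Nonempty) (hcomp : IsCompact F) (hconv : Convex ℝ F)
    (r qstar : EuclideanSpace ℝ (Fin m)) (hqstar : qstar ∈ F)
    (hmin : ∀ q ∈ F, ‖r - qstar‖ ^ 2 ≤ ‖r - q‖ ^ 2)
    (q v : ℕ → EuclideanSpace ℝ (Fin m)) (α : ℕ → ℝ)
    (hq0 : q 0 ∈ F)
    (hv : ∀ t : ℕ, v (t + 1) ∈ F ∧ ∀ u ∈ F, ⟪r - q t, u⟫ ≤ ⟪r - q t, v (t + 1)⟫)
    (hα : ∀ t : ℕ, α (t + 1) ∈ Set.Icc (0 : ℝ) 1 ∧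
      ∀ b ∈ Set.Icc (0 : ℝ) 1,
        ‖r - (α (t + 1) • q t + (1 - α (t + 1)) • v (t + 1))‖ ^ 2 ≤
          ‖r - (b • q t + (1 - b) • v (t + 1))‖ ^ 2)
    (hrec : ∀ t : ℕ, q (t + 1) = α (t + 1) • q t + (1 - α (t + 1)) • v (t + 1)) :
    ∀ T : ℕ, 1 ≤ T →
      ‖r - q T‖ ^ 2 ≤ ‖r - qstar‖ ^ 2 + 4 * Metric.diam F ^ 2 / ((T : ℝ) + 3) := by
  set D := Metric.diam F with hDdef
  have hD0 : 0 ≤ D := Metric.diam_nonneg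
  have hbd := hcomp.isBounded
  have hmem : ∀ t, q t ∈ F := by
    intro t
    induction t with
    | zero => exact hq0
    | succ n ih =>
      rw [hrec n]
      exact hconv ih (hv n).1 (hα n).1.1 (by linarith [(hα n).1.2]) (by ring)
  have hdist : ∀ t, ‖v (t + 1) - q t‖ ≤ D := by
    intro t
    rw [← dist_eq_norm]
    exact Metric.dist_le_diam_of_mem hbd (hv t).1 (hmem t)
  set g : ℕ → ℝ := fun t => ⟪r - q t, v (t + 1) - q t⟫ with hg
  have hstep : ∀ t, ∀ γ : ℝ, γ ∈ Set.Icc (0 : ℝ) 1 →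
      ‖r - q (t + 1)‖ ^ 2 ≤ ‖r - q t‖ ^ 2 - 2 * γ * g t + γ ^ 2 * D ^ 2 := by
    intro t γ hγ
    have h1 := (hα t).2 (1 - γ) ⟨by linarith [hγ.2], by linarith [hγ.1]⟩
    rw [← hrec t] at h1
    have heq : r - ((1 - γ) • q t + (1 - (1 - γ)) • v (t + 1))
        = (r - q t) - γ • (v (t + 1) - q t) := by
      simp only [sub_sub_cancel, smul_sub, sub_smul, one_smul]
      abel
    have hexp : ‖(r - q t) - γ • (v (t + 1) - q t)‖ ^ 2
        = ‖r - q t‖ ^ 2 - 2 * (γ * g t) + γ ^ 2 * ‖v (t + 1) - q t‖ ^ 2 := by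
      rw [norm_sub_sq_real, real_inner_smul_right, norm_smul, Real.norm_eq_abs,
        abs_of_nonneg hγ.1, mul_pow]
    rw [heq] at h1
    rw [hexp] at h1
    have hw := hdist t
    have hwn : (0:ℝ) ≤ ‖v (t + 1) - q t‖ := norm_nonneg _
    nlinarith [mul_le_mul hw hw hwn hD0, sq_nonneg γ]
  have hgap : ∀ t, ‖r - q t‖ ^ 2 - ‖r - qstar‖ ^ 2 ≤ 2 * g t := by
    intro t
    have h2 := (hv t).2 qstar hqstar
    have hexp : ‖r - qstar‖ ^ 2
        = ‖r - q t‖ ^ 2 - 2 * ⟪r - q t, qstar - q t⟫ + ‖qstar - q t‖ ^ 2 := by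
      have h : r - qstar = (r - q t) - (qstar - q t) := by abel
      rw [h, norm_sub_sq_real]
    have h3 : ⟪r - q t, qstar - q t⟫ ≤ g t := by
      simp only [hg, inner_sub_right]
      linarith
    nlinarith [sq_nonneg ‖qstar - q t‖]
  have main : ∀ T : ℕ, 1 ≤ T →
      ‖r - q T‖ ^ 2 - ‖r - qstar‖ ^ 2 ≤ 4 * D ^ 2 / ((T : ℝ) + 3) := by
    intro T hT
    induction T, hT using Nat.le_induction with
    | base =>
      have h1 := hstep 0 1 ⟨zero_le_one, le_refl 1⟩
      have h2 := hgap 0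
      norm_num
      nlinarith
    | succ t ht ih =>
      set s : ℝ := (t : ℝ) + 3 with hs
      have hs4 : (4 : ℝ) ≤ s := by
        have : (1 : ℝ) ≤ (t : ℝ) := by exact_mod_cast ht
        linarith
      have hs0 : (0 : ℝ) < s := by linarith
      have hγmem : (2 / s) ∈ Set.Icc (0 : ℝ) 1 := by
        constructor
        · positivity
        · rw [div_le_one hs0]; linarith
      have h1 := hstep t (2 / s) hγmem
      have h2 := hgap t
      have hγ0 : (0 : ℝ) ≤ 2 / s := hγmem.1
      have hγ1 : 2 / s ≤ 1 := hγmem.2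
      -- h(t+1) ≤ (1 - γ) * h t + γ² D²
      have hmul : (2 / s) * (‖r - q t‖ ^ 2 - ‖r - qstar‖ ^ 2) ≤ (2 / s) * (2 * g t) :=
        mul_le_mul_of_nonneg_left h2 hγ0
      have hmono : (1 - 2 / s) * (‖r - q t‖ ^ 2 - ‖r - qstar‖ ^ 2)
          ≤ (1 - 2 / s) * (4 * D ^ 2 / s) :=
        mul_le_mul_of_nonneg_left ih (by linarith)
      have hfin : (1 - 2 / s) * (4 * D ^ 2 / s) + (2 / s) ^ 2 * D ^ 2
          ≤ 4 * D ^ 2 / (s + 1) := by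
        have heqq : (1 - 2 / s) * (4 * D ^ 2 / s) + (2 / s) ^ 2 * D ^ 2
            = 4 * D ^ 2 * (s - 1) / s ^ 2 := by
          field_simp
          ring
        rw [heqq, div_le_div_iff₀ (by positivity) (by linarith : (0:ℝ) < s + 1)]
        nlinarith [sq_nonneg D]
      have hcast : ((t + 1 : ℕ) : ℝ) + 3 = s + 1 := by push_cast; ring
      rw [hcast]
      nlinarith [hfin, hmono, hmul, h1]
  intro T hT
  have := main T hT
  linarith
end

section
/- Let C ⊆ ℝ^m be a compact convex set symmetric about the origin, let n > 0, c > 0, ν ≥ 0, and let y ∈ n·C. Let F : ℝ^m → ℝ^m be a measurable map such that for every w ∈ ℝ^m, F(w) ∈ n·C and ‖(y + w) − F(w)‖₂² ≤ inf_{q ∈ n·C} ‖(y + w) − q‖₂² + ν. Then E_{w} ‖F(w) − y‖₂² ≤ 4 c n · ℓ*(C) + ν, where w is distributed according to the product Gaussian measure N(0, c²)^m on ℝ^m. -/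
/-! Since `y ∈ n·C`, the approximate projection `F w` of `y + w` is, up to `ν`, at least as
close to `y + w` as `y` itself; expanding the squares gives `‖F w - y‖² ≤ 2⟨w, F w - y⟩ + ν`.
By convexity and symmetry `F w - y ∈ 2n·C`, so `⟨w, F w - y⟩ ≤ 2n h_C(w)` for the support
function `h_C`. Finally `E h_C(w) = c ℓ*(C)` for `w ∼ N(0,c²)^m`, because `w` has the law of
`c g` and `h_C` is positively homogeneous. -/

open Finset MeasureTheory ProbabilityTheory
open scoped Pointwise NNReal

section

variable {ι : Type*}

lemma sub_mem_two_mul_smul {C : Set (ι → ℝ)} (hconv : Convex ℝ C) (hsym : C = -C) {n : ℝ}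
    {y z : ι → ℝ} (hy : y ∈ n • C) (hz : z ∈ n • C) : z - y ∈ (2 * n) • C := by
  obtain ⟨b, hb, rfl⟩ := hy
  obtain ⟨a, ha, rfl⟩ := hz
  have hb' : -b ∈ C := by rw [hsym]; exact Set.neg_mem_neg.2 hb
  refine ⟨(1 / 2 : ℝ) • a + (1 / 2 : ℝ) • -b,
    hconv ha hb' (by norm_num) (by norm_num) (by norm_num), ?_⟩
  ext i
  simp only [Pi.sub_apply, Pi.smul_apply, Pi.add_apply, Pi.neg_apply, smul_eq_mul]
  ring

variable [Fintype ι]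

lemma sInf_sum_sq_sub_le {K : Set (ι → ℝ)} {y : ι → ℝ} (hy : y ∈ K) (w : ι → ℝ) :
    sInf ((fun q => ∑ i, ((y + w) i - q i) ^ 2) '' K) ≤ ∑ i, w i ^ 2 :=
  csInf_le ⟨0, by rintro _ ⟨q, -, rfl⟩; positivity⟩ ⟨y, hy, by simp⟩

lemma sum_sq_sub_le_of_sum_sq_le {y z w : ι → ℝ} {ν : ℝ}
    (h : ∑ i, ((y + w) i - z i) ^ 2 ≤ ∑ i, w i ^ 2 + ν) :
    ∑ i, (z i - y i) ^ 2 ≤ 2 * w ⬝ᵥ (z - y) + ν := by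
  have hexp (i : ι) :
      ((y + w) i - z i) ^ 2 = w i ^ 2 - 2 * (w i * (z - y) i) + (z i - y i) ^ 2 := by
    simp only [Pi.add_apply, Pi.sub_apply]; ring
  simp only [hexp, sum_add_distrib, sum_sub_distrib, ← mul_sum] at h
  rw [dotProduct]
  linarith

/-- The support function `h_C`; the Gaussian mean width `ℓ*(C)` is its mean under `N(0,1)^ι`. -/
noncomputable def supportFun (C : Set (ι → ℝ)) (w : ι → ℝ) : ℝ := sSup ((w ⬝ᵥ ·) '' C)

lemma le_supportFun {C : Set (ι → ℝ)} (hC : IsCompact C) (w : ι → ℝ) {v : ι → ℝ}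
    (hv : v ∈ C) : w ⬝ᵥ v ≤ supportFun C w :=
  le_csSup ((hC.image (continuous_const.dotProduct continuous_id)).bddAbove) ⟨v, hv, rfl⟩

lemma sum_sq_sub_le_supportFun {C : Set (ι → ℝ)} (hC : IsCompact C) (hconv : Convex ℝ C)
    (hsym : C = -C) {n : ℝ} (hn : 0 ≤ n) {y z w : ι → ℝ} (hy : y ∈ n • C) (hz : z ∈ n • C)
    {ν : ℝ} (h : ∑ i, ((y + w) i - z i) ^ 2 ≤
      sInf ((fun q => ∑ i, ((y + w) i - q i) ^ 2) '' (n • C)) + ν) :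
    ∑ i, (z i - y i) ^ 2 ≤ 4 * n * supportFun C w + ν := by
  obtain ⟨v, hv, hzy⟩ := sub_mem_two_mul_smul hconv hsym hy hz
  have hproj := sum_sq_sub_le_of_sum_sq_le (h.trans (by grw [sInf_sum_sq_sub_le hy w]))
  rw [← hzy, dotProduct_smul, smul_eq_mul] at hproj
  nlinarith [le_supportFun hC w hv]

lemma supportFun_smul (C : Set (ι → ℝ)) {c : ℝ} (hc : 0 ≤ c) (w : ι → ℝ) :
    supportFun C (c • w) = c * supportFun C w := by
  rw [supportFun, supportFun, ← smul_eq_mul, ← Real.sSup_smul_of_nonneg hc, ← Set.image_smul,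
    Set.image_image]
  simp_rw [smul_dotProduct]

lemma continuous_supportFun {C : Set (ι → ℝ)} (hC : IsCompact C) : Continuous (supportFun C) :=
  hC.continuous_sSup (f := fun w v => w ⬝ᵥ v) (continuous_fst.dotProduct continuous_snd)

lemma abs_supportFun_le {C : Set (ι → ℝ)} {R : ℝ} (hR : 0 ≤ R)
    (hCR : ∀ v ∈ C, ∀ i, |v i| ≤ R) (w : ι → ℝ) :
    |supportFun C w| ≤ R * ∑ i, |w i| := by
  rcases C.eq_empty_or_nonempty with rfl | ⟨v₀, hv₀⟩
  · simp only [supportFun, Set.image_empty, Real.sSup_empty, abs_zero]; positivity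
  have hdot : ∀ v ∈ C, |w ⬝ᵥ v| ≤ R * ∑ i, |w i| := fun v hv => by
    calc |w ⬝ᵥ v| ≤ ∑ i, |w i * v i| := abs_sum_le_sum_abs _ _
      _ ≤ ∑ i, |w i| * R := by
        gcongr with i; rw [abs_mul]; exact mul_le_mul_of_nonneg_left (hCR v hv i) (abs_nonneg _)
      _ = R * ∑ i, |w i| := by rw [mul_sum]; simp_rw [mul_comm]
  have hbdd : ∀ x ∈ (w ⬝ᵥ ·) '' C, x ≤ R * ∑ i, |w i| := by
    rintro _ ⟨v, hv, rfl⟩; exact (le_abs_self _).trans (hdot v hv)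
  have hle : supportFun C w ≤ R * ∑ i, |w i| := Real.sSup_le hbdd (by positivity)
  have hge : -(R * ∑ i, |w i|) ≤ supportFun C w :=
    (neg_le_of_abs_le (hdot v₀ hv₀)).trans (le_csSup ⟨_, hbdd⟩ ⟨v₀, hv₀, rfl⟩)
  exact abs_le.2 ⟨hge, hle⟩

lemma integrable_supportFun_gaussianPi {C : Set (ι → ℝ)} (hC : IsCompact C) (v : ℝ≥0) :
    Integrable (supportFun C) (Measure.pi fun _ : ι => gaussianReal 0 v) := by
  obtain ⟨R, hR⟩ := hC.isBounded.exists_norm_le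
  have hCR : ∀ v ∈ C, ∀ i, |v i| ≤ max R 0 := fun v hv i =>
    (norm_le_pi_norm v i).trans ((hR v hv).trans (le_max_left _ _))
  have hcoord (i : ι) :
      Integrable (fun w : ι → ℝ => |w i|) (Measure.pi fun _ : ι => gaussianReal 0 v) :=
    ((measurePreserving_eval _ i).integrable_comp continuous_abs.aestronglyMeasurable).2
      (memLp_one_iff_integrable.1 (memLp_id_gaussianReal' 1 ENNReal.one_ne_top)).abs
  exact ((integrable_finsetSum univ fun i _ => hcoord i).const_mul (max R 0)).mono'
    (continuous_supportFun hC).aestronglyMeasurable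
    (ae_of_all _ (abs_supportFun_le (le_max_right _ _) hCR))

lemma measurePreserving_smul_gaussianPi (c : ℝ) :
    MeasurePreserving (c • ·) (Measure.pi fun _ : ι => gaussianReal 0 1)
      (Measure.pi fun _ : ι => gaussianReal 0 (c ^ 2).toNNReal) := by
  refine measurePreserving_pi (f := fun _ => (c * ·)) _ _ fun _ => ⟨measurable_const_mul c, ?_⟩
  rw [gaussianReal_map_const_mul, mul_zero, mul_one, Real.toNNReal_of_nonneg (sq_nonneg c)]

lemma integral_supportFun_gaussianPi {C : Set (ι → ℝ)} (hC : IsCompact C) {c : ℝ}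
    (hc : 0 ≤ c) :
    ∫ w, supportFun C w ∂(Measure.pi fun _ : ι => gaussianReal 0 (c ^ 2).toNNReal) =
      c * ∫ g, supportFun C g ∂(Measure.pi fun _ : ι => gaussianReal 0 1) := by
  have hmp := measurePreserving_smul_gaussianPi (ι := ι) c
  rw [← hmp.map_eq, integral_map hmp.measurable.aemeasurable
    (continuous_supportFun hC).aestronglyMeasurable, ← integral_const_mul]
  simp_rw [supportFun_smul C hc]

end

theorem stmt_15_general {m : ℕ} (C : Set (Fin m → ℝ))
    (hcomp : IsCompact C) (hconv : Convex ℝ C) (hsym : C = -C)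
    (n c ν : ℝ) (hn : 0 < n) (hc : 0 < c)
    (y : Fin m → ℝ) (hy : y ∈ n • C)
    (F : (Fin m → ℝ) → (Fin m → ℝ))
    (hF : ∀ w : Fin m → ℝ, F w ∈ n • C ∧
      ∑ i, ((y + w) i - F w i) ^ 2 ≤
        sInf ((fun q => ∑ i, ((y + w) i - q i) ^ 2) '' (n • C)) + ν) :
    (∫ w : Fin m → ℝ, (∑ i, (F w i - y i) ^ 2)
        ∂(Measure.pi fun _ : Fin m => gaussianReal 0 (Real.toNNReal (c ^ 2)))) ≤
      4 * c * n *
        (∫ g : Fin m → ℝ, sSup ((fun v => ∑ i, g i * v i) '' C)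
          ∂(Measure.pi fun _ : Fin m => gaussianReal 0 1)) + ν := by
  change _ ≤ 4 * c * n * ∫ g, supportFun C g ∂_ + ν
  have hS := integrable_supportFun_gaussianPi hcomp (c ^ 2).toNNReal
  calc _ ≤ ∫ w, (4 * n * supportFun C w + ν)
        ∂(Measure.pi fun _ : Fin m => gaussianReal 0 (c ^ 2).toNNReal) :=
        integral_mono_of_nonneg (ae_of_all _ fun w => by positivity)
          ((hS.const_mul _).add (integrable_const ν)) (ae_of_all _ fun w =>
            sum_sq_sub_le_supportFun hcomp hconv hsym hn.le hy (hF w).1 (hF w).2)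
    _ = 4 * n * ∫ w, supportFun C w
        ∂(Measure.pi fun _ : Fin m => gaussianReal 0 (c ^ 2).toNNReal) + ν := by
        rw [integral_add (hS.const_mul _) (integrable_const ν), integral_const_mul,
          integral_const, probReal_univ, one_smul]
    _ = _ := by rw [integral_supportFun_gaussianPi hcomp hc.le]; ring

/-- Let `C ⊆ ℝ^m` be compact convex symmetric, `n, c > 0`, `ν ≥ 0`,
`y ∈ n·C`, and let `F` be a measurable map such that for every `w`, `F(w) ∈ n·C` is a
`ν`-approximate Euclidean projection of `y + w` onto `n·C`. Then
`E_{w ∼ N(0,c²)^m} ‖F(w) − y‖₂² ≤ 4cn·ℓ*(C) + ν`, where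
`ℓ*(C) = E_{g ∼ N(0,1)^m} sup_{v ∈ C} ⟨g, v⟩`. -/
theorem stmt_15 {m : ℕ} (C : Set (Fin m → ℝ))
    (hcomp : IsCompact C) (hconv : Convex ℝ C) (hsym : C = -C)
    (n c ν : ℝ) (hn : 0 < n) (hc : 0 < c) (hν : 0 ≤ ν)
    (y : Fin m → ℝ) (hy : y ∈ n • C)
    (F : (Fin m → ℝ) → (Fin m → ℝ)) (hFmeas : Measurable F)
    (hF : ∀ w : Fin m → ℝ, F w ∈ n • C ∧
      ∑ i, ((y + w) i - F w i) ^ 2 ≤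
        sInf ((fun q => ∑ i, ((y + w) i - q i) ^ 2) '' (n • C)) + ν) :
    (∫ w : Fin m → ℝ, (∑ i, (F w i - y i) ^ 2)
        ∂(Measure.pi fun _ : Fin m => gaussianReal 0 (Real.toNNReal (c ^ 2)))) ≤
      4 * c * n *
        (∫ g : Fin m → ℝ, sSup ((fun v => ∑ i, g i * v i) '' C)
          ∂(Measure.pi fun _ : Fin m => gaussianReal 0 1)) + ν :=
  stmt_15_general C hcomp hconv hsym n c ν hn hc y hy F hF
end
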